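/- arXiv:1401.0171 — 2 statements merged into one kernel-verified Lean document; each statement's English description precedes it below -/
import Mathlib

section
/- If H is a home-base hypergraph with home-base partition (𝓕, 𝓡, W), then for every pair of distinct indices i, j ∈ {1, 2, 3}, the i-heavy (i, j)-cover of H is a vertex cover of H of size 2ν(H) = τ(H), and hence a minimum vertex cover of H. -/
noncomputable section

attribute [local instance] Classical.propDecidable

universe u

variable {α : Type u}

/-- A 3-partite 3-uniform multihypergraph: vertex classes `V1, V2, V3` and a
multiset of edges, each edge being a triple with one vertex in each class
(parallel edges are allowed via multiplicities). -/
structure TriSys (α : Type u) where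
  V1 : Finset α
  V2 : Finset α
  V3 : Finset α
  h12 : Disjoint V1 V2
  h13 : Disjoint V1 V3
  h23 : Disjoint V2 V3
  edges : Multiset (α × α × α)
  mem1 : ∀ e ∈ edges, e.1 ∈ V1
  mem2 : ∀ e ∈ edges, e.2.1 ∈ V2
  mem3 : ∀ e ∈ edges, e.2.2 ∈ V3

/-- The vertex set of an edge. -/
def evset (e : α × α × α) : Finset α := {e.1, e.2.1, e.2.2}

/-- The coordinates of an edge, indexed by `Fin 3`. -/
def ecoord (e : α × α × α) : Fin 3 → α := ![e.1, e.2.1, e.2.2]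

namespace TriSys

def verts (H : TriSys α) : Finset α := H.V1 ∪ H.V2 ∪ H.V3

/-- The vertex classes, indexed by `Fin 3`. -/
def cls (H : TriSys α) : Fin 3 → Finset α := ![H.V1, H.V2, H.V3]

/-- A matching: a set of (pairwise vertex-disjoint) edges. -/
def IsMatching (H : TriSys α) (M : Finset (α × α × α)) : Prop :=
  (∀ e ∈ M, e ∈ H.edges) ∧
  (↑M : Set (α × α × α)).Pairwise fun e f => Disjoint (evset e) (evset f)

/-- The matching number ν. -/
def nu (H : TriSys α) : ℕ :=
  sSup {n : ℕ | ∃ M : Finset (α × α × α), H.IsMatching M ∧ M.card = n}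

/-- A vertex cover: a set of vertices meeting every edge. -/
def IsCover (H : TriSys α) (T : Finset α) : Prop :=
  ∀ e ∈ H.edges, ∃ v ∈ T, v ∈ evset e

/-- The vertex cover number τ. -/
def tau (H : TriSys α) : ℕ :=
  sInf {n : ℕ | ∃ T : Finset α, H.IsCover T ∧ T.card = n}

/-- Deletion of a set of vertices (and all edges meeting it). -/
def delete (H : TriSys α) (S : Finset α) : TriSys α where
  V1 := H.V1 \ S
  V2 := H.V2 \ S
  V3 := H.V3 \ S
  h12 := H.h12.mono Finset.sdiff_subset Finset.sdiff_subset
  h13 := H.h13.mono Finset.sdiff_subset Finset.sdiff_subset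
  h23 := H.h23.mono Finset.sdiff_subset Finset.sdiff_subset
  edges := H.edges.filter fun e => e.1 ∉ S ∧ e.2.1 ∉ S ∧ e.2.2 ∉ S
  mem1 := fun e he => by
    rw [Multiset.mem_filter] at he
    exact Finset.mem_sdiff.mpr ⟨H.mem1 e he.1, he.2.1⟩
  mem2 := fun e he => by
    rw [Multiset.mem_filter] at he
    exact Finset.mem_sdiff.mpr ⟨H.mem2 e he.1, he.2.2.1⟩
  mem3 := fun e he => by
    rw [Multiset.mem_filter] at he
    exact Finset.mem_sdiff.mpr ⟨H.mem3 e he.1, he.2.2.2⟩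

end TriSys

/-- The four edges of a truncated Fano plane on vertices `a,b,c,x,y,z`
(with classes `{a,x} ⊆ V1`, `{b,y} ⊆ V2`, `{c,z} ⊆ V3`). -/
def FanoEdges (a b c x y z : α) : Finset (α × α × α) :=
  {(a, b, c), (a, y, z), (x, b, z), (x, y, c)}

/-- The supports of the edges of `H` induced on a vertex subset `F`. -/
def inducedEdges (H : TriSys α) (F : Finset α) : Finset (α × α × α) :=
  (H.edges.filter fun e => evset e ⊆ F).toFinset

/-- `H` induces a truncated multi-Fano plane on the six-element set `F`. -/
def IsMultiFano (H : TriSys α) (F : Finset α) : Prop :=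
  ∃ a b c x y z : α,
    a ∈ H.V1 ∧ x ∈ H.V1 ∧ b ∈ H.V2 ∧ y ∈ H.V2 ∧ c ∈ H.V3 ∧ z ∈ H.V3 ∧
    a ≠ x ∧ b ≠ y ∧ c ≠ z ∧
    F = {a, b, c, x, y, z} ∧
    inducedEdges H F = FanoEdges a b c x y z

/-- The data of an FR-partition: the families `𝓕` and `𝓡` and the set `W`. -/
structure FRData (α : Type u) where
  Ffam : Finset (Finset α)
  Rfam : Finset (Finset α)
  W : Finset α

/-- The union of the members of a family of sets. -/
def famUnion (G : Finset (Finset α)) : Finset α := G.biUnion id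

/-- `(𝓕, 𝓡, W)` is an FR-partition of `H`. -/
def IsFRPartition (H : TriSys α) (P : FRData α) : Prop :=
  (∀ A ∈ P.Ffam, ∀ B ∈ P.Ffam, A ≠ B → Disjoint A B) ∧
  (∀ A ∈ P.Rfam, ∀ B ∈ P.Rfam, A ≠ B → Disjoint A B) ∧
  (∀ A ∈ P.Ffam, ∀ B ∈ P.Rfam, Disjoint A B) ∧
  (∀ A ∈ P.Ffam, Disjoint A P.W) ∧
  (∀ B ∈ P.Rfam, Disjoint B P.W) ∧
  famUnion P.Ffam ∪ famUnion P.Rfam ∪ P.W = H.verts ∧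
  (∀ A ∈ P.Ffam, IsMultiFano H A) ∧
  (∀ B ∈ P.Rfam, ∃ r1 ∈ H.V1, ∃ r2 ∈ H.V2, ∃ r3 ∈ H.V3, B = {r1, r2, r3}) ∧
  P.Ffam.card + P.Rfam.card = H.nu

/-- `w` is joined to `R` in the auxiliary bipartite graph `B_i`: some edge of
`H` contains `w` and two vertices of `R`. -/
def RAdj (H : TriSys α) (R : Finset α) (w : α) : Prop :=
  ∃ e ∈ H.edges, w ∈ evset e ∧ 2 ≤ (evset e ∩ R).card

/-- The auxiliary bipartite graph on `Rfam` and `Wi` has a matching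
saturating `Rfam`. -/
def SaturatingR (H : TriSys α) (Rfam : Finset (Finset α)) (Wi : Finset α) : Prop :=
  ∃ f : Finset α → α, Set.InjOn f ↑Rfam ∧ ∀ R ∈ Rfam, f R ∈ Wi ∧ RAdj H R (f R)

/-- Matchability of an FR-partition. -/
def IsMatchable (H : TriSys α) (P : FRData α) : Prop :=
  ∀ i : Fin 3, SaturatingR H P.Rfam (P.W ∩ H.cls i)

/-- The edge-home property: every edge is an `F`-edge or an `R`-edge. -/
def EdgeHome (H : TriSys α) (P : FRData α) : Prop :=
  ∀ e ∈ H.edges,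
    (∃ A ∈ P.Ffam, evset e ⊆ A) ∨ (∃ B ∈ P.Rfam, 2 ≤ (evset e ∩ B).card)

/-- A home-base partition: a matchable FR-partition with the edge-home
property. -/
def IsHomeBasePartition (H : TriSys α) (P : FRData α) : Prop :=
  IsFRPartition H P ∧ IsMatchable H P ∧ EdgeHome H P

/-- A home-base hypergraph: one admitting a home-base partition. -/
def IsHomeBase (H : TriSys α) : Prop :=
  ∃ P : FRData α, IsHomeBasePartition H P

/-- The neighborhood of a family `U` of `R`'s in the auxiliary bipartite
graph with `W`-side `Wi`. -/
def RNbhd (H : TriSys α) (Wi : Finset α) (U : Finset (Finset α)) : Finset α :=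
  Wi.filter fun w => ∃ R ∈ U, RAdj H R w

/-- `C` is an essential subset of `Wi` in the auxiliary bipartite graph:
`C = N(U)` for some `U ⊆ Rfam` with `|U| = |C|`. -/
def EssentialSet (H : TriSys α) (Rfam : Finset (Finset α)) (Wi : Finset α)
    (C : Finset α) : Prop :=
  ∃ U ⊆ Rfam, U.card = C.card ∧ RNbhd H Wi U = C

/-- `w` is a superfluous vertex of `Wi`: it lies in no essential subset
(equivalently, outside the maximal essential subset). -/
def Superfluous (H : TriSys α) (Rfam : Finset (Finset α)) (Wi : Finset α)
    (w : α) : Prop :=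
  w ∈ Wi ∧ ∀ C, EssentialSet H Rfam Wi C → w ∉ C

/-- `w` is a superfluous `W`-vertex of the FR-partition `P` (in its class). -/
def SuperfluousVert (H : TriSys α) (P : FRData α) (w : α) : Prop :=
  ∃ i : Fin 3, Superfluous H P.Rfam (P.W ∩ H.cls i) w

/-- `v` is an essential `W`-vertex of the FR-partition `P`. -/
def EssentialVertIn (H : TriSys α) (P : FRData α) (v : α) : Prop :=
  ∃ i : Fin 3, EssentialSet H P.Rfam (P.W ∩ H.cls i) {v}

/-- `v` is essential for `R`: it is the unique neighbor of `R` in some `B_i`. -/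
def EssentialForIn (H : TriSys α) (P : FRData α) (R : Finset α) (v : α) : Prop :=
  ∃ i : Fin 3, RNbhd H (P.W ∩ H.cls i) {R} = {v}

/-- The neighborhood, inside vertex class `j`, of a set `X` of class-`k`
vertices in the link graph of `H` over the remaining vertex class. -/
def nbr (H : TriSys α) (j k : Fin 3) (X : Finset α) : Finset α :=
  (H.cls j).filter fun v => ∃ e ∈ H.edges, ecoord e j = v ∧ ecoord e k ∈ X

/-- A cromulent triple `(Y1, Y2, X)` with `Y1 ⊆ V_i`, `Y2 ⊆ V_j`, `X ⊆ V_k`. -/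
def IsCromulent (H : TriSys α) (i j k : Fin 3) (Y1 Y2 X : Finset α) : Prop :=
  i ≠ j ∧ i ≠ k ∧ j ≠ k ∧
  Y1.Nonempty ∧ Y2.Nonempty ∧ X.Nonempty ∧
  Y1 ⊆ H.cls i ∧ Y2 ⊆ H.cls j ∧ X ⊆ H.cls k ∧
  Y1.card = Y2.card ∧ Y1.card ≤ X.card ∧
  nbr H j k X = Y2 ∧
  (∃ M : Finset (α × α × α), H.IsMatching M ∧ M.card = Y1.card ∧
    ∀ e ∈ M, evset e ⊆ Y1 ∪ Y2 ∪ X) ∧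
  IsHomeBase (H.delete (Y1 ∪ Y2 ∪ X)) ∧
  (H.delete (Y1 ∪ Y2 ∪ X)).nu + Y1.card = H.nu ∧
  ∀ P : FRData α, IsHomeBasePartition (H.delete (Y1 ∪ Y2 ∪ X)) P →
    nbr H i k X ⊆ Y1 ∪ famUnion P.Rfam ∪ famUnion P.Ffam

/-- A perfectly cromulent triple: condition (5) is strengthened to
`N_{Lk_{V_j}}(X) = Y1`. -/
def IsPerfCromulent (H : TriSys α) (i j k : Fin 3) (Y1 Y2 X : Finset α) : Prop :=
  i ≠ j ∧ i ≠ k ∧ j ≠ k ∧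
  Y1.Nonempty ∧ Y2.Nonempty ∧ X.Nonempty ∧
  Y1 ⊆ H.cls i ∧ Y2 ⊆ H.cls j ∧ X ⊆ H.cls k ∧
  Y1.card = Y2.card ∧ Y1.card ≤ X.card ∧
  nbr H j k X = Y2 ∧
  (∃ M : Finset (α × α × α), H.IsMatching M ∧ M.card = Y1.card ∧
    ∀ e ∈ M, evset e ⊆ Y1 ∪ Y2 ∪ X) ∧
  IsHomeBase (H.delete (Y1 ∪ Y2 ∪ X)) ∧
  (H.delete (Y1 ∪ Y2 ∪ X)).nu + Y1.card = H.nu ∧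
  nbr H i k X = Y1

/-- The link graph of `H` over the class other than `j, k` has a perfect
matching, encoded as a bijection from class `j` onto class `k` realized by
edges of `H`. -/
def LinkPerfectMatching (H : TriSys α) (j k : Fin 3) : Prop :=
  ∃ f : α → α, Set.InjOn f ↑(H.cls j) ∧ (H.cls j).image f = H.cls k ∧
    ∀ v ∈ H.cls j, ∃ e ∈ H.edges, ecoord e j = v ∧ ecoord e k = f v

/-- A proper FR-partition: no `R ∈ 𝓡` together with an edge consisting of
three `W`-vertices induces a truncated (multi-)Fano plane. -/
def IsProper (H : TriSys α) (P : FRData α) : Prop :=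
  ¬ ∃ R ∈ P.Rfam, ∃ e ∈ H.edges, evset e ⊆ P.W ∧ IsMultiFano H (R ∪ evset e)


/-! Every edge either lies in a Fano block `F ∈ 𝓕` or meets some `R ∈ 𝓡` in two vertices. A Fano
edge is hit by its class-`i` vertex. An `R`-edge avoiding the class-`i` vertex of `R` contains the
class-`j` vertex of `R`, which is in the cover unless `R ∈ 𝓤_i`; in that case the class-`i` vertex
of the edge is either outside `W` or a neighbour of `𝓤_i` in `B_i`, i.e. a vertex of `C_i`.
The cover has `|C_i| + 2|𝓕| + |𝓡| + (|𝓡| - |𝓤_i|) = 2ν` vertices since `|𝓤_i| = |C_i|`.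

Conversely, every vertex cover has two vertices in each Fano block, and two in each set
`R ∪ {w₁, w₂, w₃}`, where `w_m` is the partner of `R` in a saturating matching of `B_m`: in both
cases there are three edges inside the set without a common vertex. These `ν` sets are pairwise
disjoint, so `τ ≥ 2ν`. -/

namespace Finset

variable {β : Type*} {A B S T e₁ e₂ e₃ : Finset β}

theorem card_sdiff_le_one_of_two_le_card_inter (hA : A.card ≤ 3) (h : 2 ≤ (A ∩ B).card) :
    (A \ B).card ≤ 1 := by
  have := card_sdiff_add_card_inter A B
  omega

theorem mem_of_two_le_card_inter {a b : β} (hB : B.card ≤ 3) (ha : a ∈ B) (hb : b ∈ B)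
    (hab : a ≠ b) (h : 2 ≤ (A ∩ B).card) (haA : a ∉ A) : b ∈ A := by
  by_contra hbA
  have hpair := card_le_card (show ({a, b} : Finset β) ⊆ B \ A by
    simp [insert_subset_iff, ha, hb, haA, hbA])
  rw [card_pair hab] at hpair
  rw [inter_comm] at h
  have := card_sdiff_add_card_inter B A
  omega

theorem one_lt_card_inter_of_meets_three (h₁ : ∃ v ∈ T, v ∈ e₁) (h₂ : ∃ v ∈ T, v ∈ e₂)
    (h₃ : ∃ v ∈ T, v ∈ e₃) (h₁S : e₁ ⊆ S) (h₂S : e₂ ⊆ S) (h₃S : e₃ ⊆ S)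
    (h : ∀ v ∈ e₁, v ∈ e₂ → v ∉ e₃) : 1 < (T ∩ S).card := by
  obtain ⟨v₁, hv₁T, hv₁⟩ := h₁
  obtain ⟨v₂, hv₂T, hv₂⟩ := h₂
  obtain ⟨v₃, hv₃T, hv₃⟩ := h₃
  by_contra! hTS
  have hsub := card_le_one.1 hTS
  have h₁₂ := hsub v₁ (mem_inter.2 ⟨hv₁T, h₁S hv₁⟩) v₂ (mem_inter.2 ⟨hv₂T, h₂S hv₂⟩)
  have h₃₂ := hsub v₃ (mem_inter.2 ⟨hv₃T, h₃S hv₃⟩) v₂ (mem_inter.2 ⟨hv₂T, h₂S hv₂⟩)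
  exact h v₂ (h₁₂ ▸ hv₁) hv₂ (h₃₂ ▸ hv₃)

theorem card_mul_le_card_inter_biUnion {ι : Type*} {s : Finset ι} {f : ι → Finset β} {c : ℕ}
    (hf : ∀ a ∈ s, ∀ b ∈ s, a ≠ b → Disjoint (f a) (f b)) (h : ∀ a ∈ s, c ≤ (T ∩ f a).card) :
    s.card * c ≤ (T ∩ s.biUnion f).card := by
  rw [inter_biUnion, card_biUnion fun a ha b hb hne =>
    (hf a ha b hb hne).mono inter_subset_right inter_subset_right]
  exact card_nsmul_le_sum s _ c h

end Finset

theorem mem_evset_iff {e : α × α × α} {v : α} : v ∈ evset e ↔ ∃ m, ecoord e m = v := by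
  simp [evset, ecoord, Fin.exists_fin_succ, eq_comm]

theorem eq_of_mem_evset_of_notMem {e : α × α × α} {R : Finset α} (h : 2 ≤ (evset e ∩ R).card)
    {u v : α} (hu : u ∈ evset e) (huR : u ∉ R) (hv : v ∈ evset e) (hvR : v ∉ R) : u = v :=
  Finset.card_le_one.1 (Finset.card_sdiff_le_one_of_two_le_card_inter Finset.card_le_three h)
    u (Finset.mem_sdiff.2 ⟨hu, huR⟩) v (Finset.mem_sdiff.2 ⟨hv, hvR⟩)

theorem card_famUnion_inter {G : Finset (Finset α)} {X : Finset α} {c : ℕ}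
    (hG : ∀ A ∈ G, ∀ B ∈ G, A ≠ B → Disjoint A B) (hc : ∀ A ∈ G, (A ∩ X).card = c) :
    (famUnion G ∩ X).card = G.card * c := by
  rw [famUnion, Finset.biUnion_inter]
  exact (Finset.card_biUnion fun A hA B hB hne => (hG A hA B hB hne).mono
    Finset.inter_subset_left Finset.inter_subset_left).trans (Finset.sum_const_nat hc)

namespace TriSys

variable (H : TriSys α)

theorem cls_disjoint {m m' : Fin 3} (h : m ≠ m') : Disjoint (H.cls m) (H.cls m') := by
  have := H.h12; have := H.h13; have := H.h23
  fin_cases m <;> fin_cases m' <;> simp_all [cls, disjoint_comm]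

theorem cls_subset_verts (m : Fin 3) : H.cls m ⊆ H.verts := by
  fin_cases m <;> intro v hv <;> simp_all [cls, verts]

variable {H}

theorem ecoord_mem_cls {e : α × α × α} (he : e ∈ H.edges) (m : Fin 3) :
    ecoord e m ∈ H.cls m := by
  fin_cases m
  exacts [H.mem1 e he, H.mem2 e he, H.mem3 e he]

theorem eq_ecoord_of_mem_cls {e : α × α × α} (he : e ∈ H.edges) {v : α} (hv : v ∈ evset e)
    {m : Fin 3} (hm : v ∈ H.cls m) : v = ecoord e m := by
  obtain ⟨m', rfl⟩ := mem_evset_iff.1 hv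
  by_contra hne
  have hm' : m' ≠ m := fun h => hne (h ▸ rfl)
  exact Finset.disjoint_left.1 (H.cls_disjoint hm') (ecoord_mem_cls he m') hm

theorem triple_inter_cls {r₁ r₂ r₃ : α} (h₁ : r₁ ∈ H.V1) (h₂ : r₂ ∈ H.V2) (h₃ : r₃ ∈ H.V3)
    (m : Fin 3) : ({r₁, r₂, r₃} : Finset α) ∩ H.cls m = {![r₁, r₂, r₃] m} := by
  have h12 := Finset.disjoint_left.1 H.h12
  have h13 := Finset.disjoint_left.1 H.h13
  have h23 := Finset.disjoint_left.1 H.h23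
  fin_cases m <;> ext v <;> simp [cls] <;> grind

theorem IsCover.two_le_card_inter_of_isMultiFano {T F : Finset α} (hT : H.IsCover T)
    (hF : IsMultiFano H F) : 2 ≤ (T ∩ F).card := by
  obtain ⟨a, b, c, x, y, z, -, -, -, -, -, -, hax, hby, hcz, -, hind⟩ := hF
  have hedge : ∀ p ∈ FanoEdges a b c x y z, p ∈ H.edges ∧ evset p ⊆ F := by
    intro p hp
    rw [← hind] at hp
    simpa [inducedEdges] using hp
  obtain ⟨h₁, h₁F⟩ := hedge (a, b, c) (by simp [FanoEdges])
  obtain ⟨h₂, h₂F⟩ := hedge (a, y, z) (by simp [FanoEdges])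
  obtain ⟨h₃, h₃F⟩ := hedge (x, b, z) (by simp [FanoEdges])
  refine Finset.one_lt_card_inter_of_meets_three (hT _ h₁) (hT _ h₂) (hT _ h₃) h₁F h₂F h₃F ?_
  intro v hv₁ hv₂ hv₃
  obtain ⟨m, rfl⟩ := mem_evset_iff.1 hv₁
  have hm := ecoord_mem_cls h₁ m
  have e₂ := eq_ecoord_of_mem_cls h₂ hv₂ hm
  have e₃ := eq_ecoord_of_mem_cls h₃ hv₃ hm
  fin_cases m <;> simp_all [ecoord]

theorem IsCover.two_le_card_inter_of_rAdj {T R : Finset α} (hT : H.IsCover T) {w : Fin 3 → α}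
    (hw : ∀ m, w m ∈ H.cls m) (hwR : ∀ m, w m ∉ R) (hadj : ∀ m, RAdj H R (w m)) :
    2 ≤ (T ∩ (R ∪ Finset.univ.image w)).card := by
  choose e he hwe he₂ using hadj
  have hsub : ∀ m, evset (e m) ⊆ R ∪ Finset.univ.image w := by
    intro m v hv
    by_cases hvR : v ∈ R
    · exact Finset.mem_union_left _ hvR
    · rw [eq_of_mem_evset_of_notMem (he₂ m) hv hvR (hwe m) (hwR m)]
      exact Finset.mem_union_right _ (Finset.mem_image_of_mem w (Finset.mem_univ m))
  refine Finset.one_lt_card_inter_of_meets_three (hT _ (he 0)) (hT _ (he 1)) (hT _ (he 2))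
    (hsub 0) (hsub 1) (hsub 2) ?_
  intro v hv₀ hv₁ hv₂
  have hv : ∀ m, v ∈ evset (e m) := by
    intro m
    fin_cases m <;> assumption
  obtain ⟨m, hm⟩ : ∃ m, v ∈ H.cls m := by
    obtain ⟨m, rfl⟩ := mem_evset_iff.1 hv₀
    exact ⟨m, ecoord_mem_cls (he 0) m⟩
  -- `v` is the class-`m` vertex of `e m`, hence `w m`, so it lies outside `R`; but then it is
  -- also the unique vertex of `e m'` outside `R`, namely `w m'`, which lies in another class.
  have hvw : v = w m := (eq_ecoord_of_mem_cls (he m) (hv m) hm).trans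
    (eq_ecoord_of_mem_cls (he m) (hwe m) (hw m)).symm
  obtain ⟨m', hm'⟩ := exists_ne m
  have hvw' : v = w m' :=
    eq_of_mem_evset_of_notMem (he₂ m') (hv m') (hvw ▸ hwR m) (hwe m') (hwR m')
  exact Finset.disjoint_left.1 (H.cls_disjoint hm') (hvw' ▸ hw m') hm

theorem tau_eq_card_of_isCover {T : Finset α} (hT : H.IsCover T)
    (hmin : ∀ T', H.IsCover T' → T.card ≤ T'.card) : H.tau = T.card :=
  le_antisymm (Nat.sInf_le ⟨T, hT, rfl⟩)
    (le_csInf ⟨_, T, hT, rfl⟩ fun _ ⟨T', hT', h⟩ => h ▸ hmin T' hT')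

end TriSys

theorem IsMultiFano.card_inter_cls {H : TriSys α} {F : Finset α} (hF : IsMultiFano H F)
    (m : Fin 3) : (F ∩ H.cls m).card = 2 := by
  obtain ⟨a, b, c, x, y, z, ha, hx, hb, hy, hc, hz, hax, hby, hcz, rfl, -⟩ := hF
  have hsplit : ({a, b, c, x, y, z} : Finset α) = {a, b, c} ∪ {x, y, z} := by
    ext
    simp only [Finset.mem_insert, Finset.mem_union, Finset.mem_singleton]
    tauto
  have hne : ![a, b, c] m ≠ ![x, y, z] m := by
    fin_cases m <;> simpa
  rw [hsplit, Finset.union_inter_distrib_right, TriSys.triple_inter_cls ha hb hc,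
    TriSys.triple_inter_cls hx hy hz,
    Finset.card_union_of_disjoint (Finset.disjoint_singleton.2 hne), Finset.card_singleton,
    Finset.card_singleton]

def heavyCover (H : TriSys α) (P : FRData α) (i j : Fin 3) (Ci : Finset α)
    (Ui : Finset (Finset α)) : Finset α :=
  (Ci ∪ ((famUnion P.Ffam ∪ famUnion P.Rfam) ∩ H.cls i)) ∪
    (P.Rfam \ Ui).biUnion (fun R => R ∩ H.cls j)

namespace IsFRPartition

variable {H : TriSys α} {P : FRData α} (hP : IsFRPartition H P)
include hP

theorem disjoint_famUnion_Ffam_W : Disjoint (famUnion P.Ffam) P.W := by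
  obtain ⟨-, -, -, hFW, -⟩ := hP
  exact (Finset.disjoint_biUnion_left _ _ _).2 hFW

theorem disjoint_famUnion_Rfam_W : Disjoint (famUnion P.Rfam) P.W := by
  obtain ⟨-, -, -, -, hRW, -⟩ := hP
  exact (Finset.disjoint_biUnion_left _ _ _).2 hRW

theorem disjoint_famUnion_Ffam_Rfam : Disjoint (famUnion P.Ffam) (famUnion P.Rfam) := by
  obtain ⟨-, -, hFR, -⟩ := hP
  exact (Finset.disjoint_biUnion_left _ _ _).2 fun A hA =>
    (Finset.disjoint_biUnion_right _ _ _).2 (hFR A hA)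

theorem exists_inter_cls_eq_singleton {R : Finset α} (hR : R ∈ P.Rfam) (m : Fin 3) :
    ∃ r, R ∩ H.cls m = {r} := by
  obtain ⟨-, -, -, -, -, -, -, hRtrip, -⟩ := hP
  obtain ⟨r₁, h₁, r₂, h₂, r₃, h₃, rfl⟩ := hRtrip R hR
  exact ⟨_, TriSys.triple_inter_cls h₁ h₂ h₃ m⟩

theorem card_le_three_of_mem_Rfam {R : Finset α} (hR : R ∈ P.Rfam) : R.card ≤ 3 := by
  obtain ⟨-, -, -, -, -, -, -, hRtrip, -⟩ := hP
  obtain ⟨r₁, -, r₂, -, r₃, -, rfl⟩ := hRtrip R hR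
  exact Finset.card_le_three

theorem card_famUnion_inter_cls_of_subset_Rfam {G : Finset (Finset α)} (hG : G ⊆ P.Rfam)
    (m : Fin 3) :
    (famUnion G ∩ H.cls m).card = G.card := by
  refine (card_famUnion_inter ?_ fun R hR => ?_).trans (mul_one _)
  · obtain ⟨-, hRdisj, -⟩ := hP
    exact fun A hA B hB => hRdisj A (hG hA) B (hG hB)
  · obtain ⟨r, hr⟩ := hP.exists_inter_cls_eq_singleton (hG hR) m
    rw [hr, Finset.card_singleton]

theorem card_famUnion_Ffam_inter_cls (m : Fin 3) :
    (famUnion P.Ffam ∩ H.cls m).card = P.Ffam.card * 2 := by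
  obtain ⟨hFdisj, -, -, -, -, -, hFano, -⟩ := hP
  exact card_famUnion_inter hFdisj fun A hA => (hFano A hA).card_inter_cls m

theorem disjoint_union_image_of_ne {g : Fin 3 → Finset α → α}
    (hginj : ∀ m, Set.InjOn (g m) P.Rfam) (hg : ∀ m, ∀ R ∈ P.Rfam, g m R ∈ P.W ∩ H.cls m)
    {R R' : Finset α} (hR : R ∈ P.Rfam) (hR' : R' ∈ P.Rfam) (hne : R ≠ R') :
    Disjoint (R ∪ Finset.univ.image fun m => g m R) (R' ∪ Finset.univ.image fun m => g m R') := by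
  obtain ⟨-, hRdisj, -, -, hRW, -⟩ := hP
  have hgW : ∀ {S}, S ∈ P.Rfam → (Finset.univ.image fun m => g m S) ⊆ P.W := fun hS =>
    Finset.image_subset_iff.2 fun m _ => (Finset.mem_inter.1 (hg m _ hS)).1
  rw [Finset.disjoint_union_left, Finset.disjoint_union_right, Finset.disjoint_union_right]
  refine ⟨⟨hRdisj R hR R' hR' hne, (hRW R hR).mono_right (hgW hR')⟩,
    ((hRW R' hR').mono_right (hgW hR)).symm, ?_⟩
  simp only [Finset.disjoint_left, Finset.mem_image, Finset.mem_univ, true_and]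
  rintro _ ⟨m, rfl⟩ ⟨m', hm'⟩
  obtain rfl : m' = m := by
    by_contra h
    exact Finset.disjoint_left.1 (H.cls_disjoint h) (Finset.mem_inter.1 (hg m' R' hR')).2
      (hm' ▸ (Finset.mem_inter.1 (hg m R hR)).2)
  exact hne (hginj m' hR' hR hm').symm

theorem two_mul_nu_le_card_of_isCover (hM : IsMatchable H P) {T : Finset α} (hT : H.IsCover T) :
    2 * H.nu ≤ T.card := by
  choose g hginj hg using hM
  set block : Finset α → Finset α := fun R => R ∪ Finset.univ.image fun m => g m R
  have hblocks : ∀ R ∈ P.Rfam, ∀ R' ∈ P.Rfam, R ≠ R' → Disjoint (block R) (block R') :=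
    fun R hR R' hR' => hP.disjoint_union_image_of_ne hginj (fun m R hR => (hg m R hR).1) hR hR'
  have hdisj : Disjoint (famUnion P.Ffam) (P.Rfam.biUnion block) := by
    have hsub : P.Rfam.biUnion block ⊆ famUnion P.Rfam ∪ P.W :=
      Finset.biUnion_subset.2 fun R hR => Finset.union_subset_union
        (Finset.subset_biUnion_of_mem id hR)
        (Finset.image_subset_iff.2 fun m _ => (Finset.mem_inter.1 (hg m R hR).1).1)
    exact (Finset.disjoint_union_right.2
      ⟨hP.disjoint_famUnion_Ffam_Rfam, hP.disjoint_famUnion_Ffam_W⟩).mono_right hsub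
  obtain ⟨hFdisj, -, -, -, hRW, -, hFano, -, hnu⟩ := hP
  have hF : P.Ffam.card * 2 ≤ (T ∩ famUnion P.Ffam).card :=
    Finset.card_mul_le_card_inter_biUnion hFdisj fun A hA =>
      hT.two_le_card_inter_of_isMultiFano (hFano A hA)
  have hR : P.Rfam.card * 2 ≤ (T ∩ P.Rfam.biUnion block).card :=
    Finset.card_mul_le_card_inter_biUnion hblocks fun R hR =>
      hT.two_le_card_inter_of_rAdj (fun m => (Finset.mem_inter.1 (hg m R hR).1).2)
        (fun m hm => Finset.disjoint_left.1 (hRW R hR) hm (Finset.mem_inter.1 (hg m R hR).1).1)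
        fun m => (hg m R hR).2
  calc 2 * H.nu = P.Ffam.card * 2 + P.Rfam.card * 2 := by rw [← hnu]; ring
    _ ≤ (T ∩ famUnion P.Ffam).card + (T ∩ P.Rfam.biUnion block).card := add_le_add hF hR
    _ = (T ∩ famUnion P.Ffam ∪ T ∩ P.Rfam.biUnion block).card :=
      (Finset.card_union_of_disjoint
        (hdisj.mono Finset.inter_subset_right Finset.inter_subset_right)).symm
    _ ≤ T.card := Finset.card_le_card (Finset.union_subset Finset.inter_subset_left
      Finset.inter_subset_left)

variable {i j : Fin 3} {Ci : Finset α} {Ui : Finset (Finset α)}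

theorem mem_heavyCover_of_notMem_W {v : α} (hv : v ∈ H.cls i) (hvW : v ∉ P.W) :
    v ∈ heavyCover H P i j Ci Ui := by
  obtain ⟨-, -, -, -, -, hpart, -⟩ := hP
  have hverts := H.cls_subset_verts i hv
  rw [← hpart, Finset.mem_union] at hverts
  exact Finset.mem_union_left _ (Finset.mem_union_right _
    (Finset.mem_inter.2 ⟨hverts.resolve_right hvW, hv⟩))

theorem isCover_heavyCover (hE : EdgeHome H P) (hij : i ≠ j)
    (hUiN : RNbhd H (P.W ∩ H.cls i) Ui ⊆ Ci) : H.IsCover (heavyCover H P i j Ci Ui) := by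
  intro e he
  have hei : ecoord e i ∈ evset e := mem_evset_iff.2 ⟨i, rfl⟩
  rcases hE e he with ⟨A, hA, heA⟩ | ⟨R, hR, h₂⟩
  · exact ⟨ecoord e i, hP.mem_heavyCover_of_notMem_W (TriSys.ecoord_mem_cls he i)
      (Finset.disjoint_left.1 hP.disjoint_famUnion_Ffam_W
        (Finset.mem_biUnion.2 ⟨A, hA, heA hei⟩)), hei⟩
  obtain ⟨ri, hri⟩ := hP.exists_inter_cls_eq_singleton hR i
  obtain ⟨rj, hrj⟩ := hP.exists_inter_cls_eq_singleton hR j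
  obtain ⟨hriR, hrii⟩ := Finset.mem_inter.1 (hri ▸ Finset.mem_singleton_self ri)
  obtain ⟨hrjR, hrjj⟩ := Finset.mem_inter.1 (hrj ▸ Finset.mem_singleton_self rj)
  by_cases hrie : ri ∈ evset e
  · exact ⟨ri, hP.mem_heavyCover_of_notMem_W hrii (Finset.disjoint_left.1
      hP.disjoint_famUnion_Rfam_W (Finset.mem_biUnion.2 ⟨R, hR, hriR⟩)), hrie⟩
  by_cases hRU : R ∈ Ui
  · refine ⟨ecoord e i, ?_, hei⟩
    by_cases hW : ecoord e i ∈ P.W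
    · refine Finset.mem_union_left _ (Finset.mem_union_left _ (hUiN ?_))
      exact Finset.mem_filter.2 ⟨Finset.mem_inter.2 ⟨hW, TriSys.ecoord_mem_cls he i⟩,
        R, hRU, e, he, hei, h₂⟩
    · exact hP.mem_heavyCover_of_notMem_W (TriSys.ecoord_mem_cls he i) hW
  · have hrji : ri ≠ rj := fun h => Finset.disjoint_left.1 (H.cls_disjoint hij) hrii (h ▸ hrjj)
    refine ⟨rj, Finset.mem_union_right _ (Finset.mem_biUnion.2
      ⟨R, Finset.mem_sdiff.2 ⟨hR, hRU⟩, Finset.mem_inter.2 ⟨hrjR, hrjj⟩⟩), ?_⟩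
    exact Finset.mem_of_two_le_card_inter (hP.card_le_three_of_mem_Rfam hR) hriR hrjR hrji h₂ hrie

theorem card_heavyCover (hij : i ≠ j) (hUiR : Ui ⊆ P.Rfam) (hUicard : Ui.card = Ci.card)
    (hCi : Ci ⊆ P.W ∩ H.cls i) : (heavyCover H P i j Ci Ui).card = 2 * H.nu := by
  have hD : ((P.Rfam \ Ui).biUnion fun R => R ∩ H.cls j) = famUnion (P.Rfam \ Ui) ∩ H.cls j :=
    (Finset.biUnion_inter _ _ _).symm
  have hCiW : Disjoint Ci ((famUnion P.Ffam ∪ famUnion P.Rfam) ∩ H.cls i) :=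
    (Finset.disjoint_union_left.2 ⟨hP.disjoint_famUnion_Ffam_W, hP.disjoint_famUnion_Rfam_W⟩
      ).symm.mono (hCi.trans Finset.inter_subset_left) Finset.inter_subset_left
  have hij' : Disjoint (Ci ∪ ((famUnion P.Ffam ∪ famUnion P.Rfam) ∩ H.cls i))
      ((P.Rfam \ Ui).biUnion fun R => R ∩ H.cls j) := by
    rw [hD]
    exact (H.cls_disjoint hij).mono (Finset.union_subset (hCi.trans Finset.inter_subset_right)
      Finset.inter_subset_right) Finset.inter_subset_right
  rw [heavyCover, Finset.card_union_of_disjoint hij', Finset.card_union_of_disjoint hCiW,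
    Finset.union_inter_distrib_right, Finset.card_union_of_disjoint
      (hP.disjoint_famUnion_Ffam_Rfam.mono Finset.inter_subset_left Finset.inter_subset_left),
    hP.card_famUnion_Ffam_inter_cls, hP.card_famUnion_inter_cls_of_subset_Rfam subset_rfl, hD,
    hP.card_famUnion_inter_cls_of_subset_Rfam Finset.sdiff_subset,
    Finset.card_sdiff_of_subset hUiR]
  obtain ⟨-, -, -, -, -, -, -, -, hnu⟩ := hP
  have := Finset.card_le_card hUiR
  omega

end IsFRPartition

theorem heavy_cover_is_minimum_cover_general (H : TriSys α) (P : FRData α)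
    (hP : IsHomeBasePartition H P)
    (i j : Fin 3) (hij : i ≠ j)
    (Ci : Finset α) (Ui : Finset (Finset α))
    (hUiR : Ui ⊆ P.Rfam) (hUicard : Ui.card = Ci.card)
    (hUiN : RNbhd H (P.W ∩ H.cls i) Ui = Ci)
    (T : Finset α)
    (hT : T = (Ci ∪ ((famUnion P.Ffam ∪ famUnion P.Rfam) ∩ H.cls i)) ∪
      (P.Rfam \ Ui).biUnion (fun R => R ∩ H.cls j)) :
    H.IsCover T ∧ T.card = 2 * H.nu ∧ 2 * H.nu = H.tau := by
  obtain ⟨hFR, hMatch, hEH⟩ := hP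
  obtain rfl : T = heavyCover H P i j Ci Ui := hT
  have hCi : Ci ⊆ P.W ∩ H.cls i := hUiN ▸ Finset.filter_subset _ _
  have hcover := hFR.isCover_heavyCover hEH hij hUiN.le
  have hcard := hFR.card_heavyCover hij hUiR hUicard hCi
  refine ⟨hcover, hcard, ?_⟩
  rw [← hcard, TriSys.tau_eq_card_of_isCover hcover]
  exact fun T' hT' => hcard ▸ hFR.two_mul_nu_le_card_of_isCover hMatch hT'

/-- The `i`-heavy `(i, j)`-cover of a home-base hypergraph is a vertex cover
of size `2ν(H) = τ(H)`, hence a minimum vertex cover. -/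
theorem heavy_cover_is_minimum_cover (H : TriSys α) (P : FRData α)
    (hP : IsHomeBasePartition H P)
    (i j : Fin 3) (hij : i ≠ j)
    (Ci : Finset α) (Ui : Finset (Finset α))
    (hCiEss : EssentialSet H P.Rfam (P.W ∩ H.cls i) Ci)
    (hCiMax : ∀ C, EssentialSet H P.Rfam (P.W ∩ H.cls i) C → C ⊆ Ci)
    (hUiR : Ui ⊆ P.Rfam) (hUicard : Ui.card = Ci.card)
    (hUiN : RNbhd H (P.W ∩ H.cls i) Ui = Ci)
    (T : Finset α)
    (hT : T = (Ci ∪ ((famUnion P.Ffam ∪ famUnion P.Rfam) ∩ H.cls i)) ∪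
      (P.Rfam \ Ui).biUnion (fun R => R ∩ H.cls j)) :
    H.IsCover T ∧ T.card = 2 * H.nu ∧ 2 * H.nu = H.tau :=
  heavy_cover_is_minimum_cover_general H P hP i j hij Ci Ui hUiR hUicard hUiN T hT
end
end

section
/- Assume the standing hypotheses on H, (Y1, Y2, X), M, H0 and (𝓕, 𝓡, W), and for each pair y ∈ Y1, y' ∈ Y2 lying in a common edge of M, let z_{y,y'} ∈ W ∩ V3 be the unique superfluous vertex such that (i) there exist u, v ∈ V(H0) with {y, v, z_{y,y'}} and {u, y', z_{y,y'}} edges of H, and (ii) every edge of H containing y or y' together with a superfluous vertex of V3 contains z_{y,y'}. Then the vertices z_{y,y'} are pairwise distinct for distinct pairs (y, y'), and the subgraph of B_3 induced by 𝓡 and (W ∩ V3) \ Z, where Z is the set of all z_{y,y'}, has a matching saturating 𝓡. -/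
noncomputable section

attribute [local instance] Classical.propDecidable

universe u

variable {α : Type u}

/-!
Fix `U ⊆ 𝓡` whose neighbourhood `N(U)` in `B₃` contains every essential vertex of `W ∩ V₃`.
Then `Y₂`, `Z ∪ N(U)`, `V₃(H₀) \ W` and the `V₁`-vertices of the members of `𝓡 \ U` cover `H`.
Indeed, an edge missing `Y₂` misses `X`, so its `V₃`-vertex `c` lies in `H₀`, and we may assume
`c ∈ W`. If the edge meets `Y₁`, then `c` is either superfluous, hence some `z_{y,y'}`, or
essential. Otherwise it is an edge of `H₀`, hence an `R`-edge through the `V₁`-vertex of `R`, and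
`c ∈ N(U)` when `R ∈ U`. As `τ(H) = 2ν(H) = 2(|𝓕| + |𝓡| + |Y₁|)`, counting gives
`|Y₁| + |U| ≤ |Z ∪ N(U)|`. When `N(U)` is the maximal essential set, which misses `Z`, this says
`|Z| ≥ |Y₁| = |M|`, so the `z_{y,y'}` are distinct. For larger `U` it says `|U| ≤ |N(U) \ Z|`, and
by submodularity of `N` Hall's condition for `(W ∩ V₃) \ Z` then holds for every subfamily of `𝓡`.
-/

open Finset

namespace TriSys

variable {H : TriSys α} {Y1 Y2 X : Finset α}

theorem tau_le_card {T : Finset α} (h : H.IsCover T) : H.tau ≤ T.card :=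
  Nat.sInf_le ⟨T, h, rfl⟩

theorem IsMatching.injOn_fst {M : Finset (α × α × α)} (hM : H.IsMatching M) :
    Set.InjOn Prod.fst (M : Set (α × α × α)) := by
  intro e he e' he' h
  by_contra hne
  exact disjoint_left.mp (hM.2 he he' hne) (show e.1 ∈ evset e by simp [evset])
    (by simp [evset, h])

theorem IsMatching.image_fst_eq {M : Finset (α × α × α)} (hM : H.IsMatching M)
    (hY2 : Y2 ⊆ H.V2) (hX : X ⊆ H.V3)
    (hsub : ∀ e ∈ M, evset e ⊆ Y1 ∪ Y2 ∪ X) (hcard : M.card = Y1.card) :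
    M.image Prod.fst = Y1 := by
  refine eq_of_subset_of_card_le ?_ (by rw [card_image_of_injOn hM.injOn_fst, hcard])
  intro y hy
  obtain ⟨e, he, rfl⟩ := mem_image.mp hy
  have h1 := H.mem1 e (hM.1 e he)
  have := hsub e he (show e.1 ∈ evset e by simp [evset])
  simp only [mem_union] at this
  rcases this with (h | h) | h
  · exact h
  · exact absurd (hY2 h) (disjoint_left.mp H.h12 h1)
  · exact absurd (hX h) (disjoint_left.mp H.h13 h1)

theorem mem_nbr_of_mem {e : α × α × α} (he : e ∈ H.edges) (hx : e.2.2 ∈ X) :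
    e.2.1 ∈ nbr H 1 2 X :=
  mem_filter.mpr ⟨H.mem2 e he, e, he, rfl, hx⟩

theorem mem_delete_V3 (hY1 : Y1 ⊆ H.V1) (hY2 : Y2 ⊆ H.V2) {c : α} (hc : c ∈ H.V3)
    (hcX : c ∉ X) :
    c ∈ (H.delete (Y1 ∪ Y2 ∪ X)).V3 := by
  simp only [delete, mem_sdiff, mem_union, not_or]
  exact ⟨hc, ⟨fun h => disjoint_left.mp H.h13 (hY1 h) hc,
    fun h => disjoint_left.mp H.h23 (hY2 h) hc⟩, hcX⟩

theorem mem_delete_edges (hY1 : Y1 ⊆ H.V1) (hY2 : Y2 ⊆ H.V2) (hX : X ⊆ H.V3)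
    {e : α × α × α} (he : e ∈ H.edges) (h1 : e.1 ∉ Y1) (h2 : e.2.1 ∉ Y2) (h3 : e.2.2 ∉ X) :
    e ∈ (H.delete (Y1 ∪ Y2 ∪ X)).edges := by
  have d12 := disjoint_left.mp H.h12
  have d13 := disjoint_left.mp H.h13
  have d23 := disjoint_left.mp H.h23
  refine Multiset.mem_filter.mpr ⟨he, ?_, ?_, ?_⟩ <;> simp only [mem_union, not_or]
  · exact ⟨⟨h1, fun h => d12 (H.mem1 e he) (hY2 h)⟩, fun h => d13 (H.mem1 e he) (hX h)⟩
  · exact ⟨⟨fun h => d12 (hY1 h) (H.mem2 e he), h2⟩, fun h => d23 (H.mem2 e he) (hX h)⟩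
  · exact ⟨⟨fun h => d13 (hY1 h) (H.mem3 e he), fun h => d23 (hY2 h) (H.mem3 e he)⟩, h3⟩

end TriSys

theorem fst_mem_of_two_le_card_evset_inter {e : α × α × α} {R : Finset α}
    (h : 2 ≤ (evset e ∩ R).card) (h3 : e.2.2 ∉ R) : e.1 ∈ R := by
  by_contra h1
  have hsub : evset e ∩ R ⊆ {e.2.1} := by
    intro v hv
    simp only [evset, mem_inter, mem_insert, mem_singleton] at hv ⊢
    rcases hv with ⟨rfl | rfl | rfl, hv⟩ <;> first | rfl | contradiction
  have := card_le_card hsub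
  rw [card_singleton] at this
  omega

theorem card_famUnion_inter_le {G : Finset (Finset α)} {S : Finset α} {k : ℕ}
    (h : ∀ A ∈ G, (A ∩ S).card ≤ k) : (famUnion G ∩ S).card ≤ k * G.card := by
  rw [famUnion, biUnion_inter, mul_comm]
  exact card_biUnion_le_card_mul _ _ _ h

theorem IsMultiFano.card_inter_V3_le {G : TriSys α} {A : Finset α} (h : IsMultiFano G A) :
    (A ∩ G.V3).card ≤ 2 := by
  obtain ⟨a, b, c, x, y, z, ha, hx, hb, hy, -, -, -, -, -, rfl, -⟩ := h
  refine (card_le_card fun v hv => ?_).trans (card_le_two (a := c) (b := z))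
  have d13 := disjoint_left.mp G.h13
  have d23 := disjoint_left.mp G.h23
  simp only [mem_inter, mem_insert, mem_singleton] at hv ⊢
  rcases hv with ⟨rfl | rfl | rfl | rfl | rfl | rfl, hv⟩
  all_goals first | simp | exact absurd hv (d13 ‹_›) | exact absurd hv (d23 ‹_›)

namespace TriSys

variable {G : TriSys α}

theorem card_triple_inter_V1_le {r1 r2 r3 : α} (h2 : r2 ∈ G.V2) (h3 : r3 ∈ G.V3) :
    ({r1, r2, r3} ∩ G.V1 : Finset α).card ≤ 1 := by
  refine (card_le_card fun v hv => ?_).trans (card_singleton r1).le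
  simp only [mem_inter, mem_insert, mem_singleton] at hv ⊢
  rcases hv with ⟨rfl | rfl | rfl, hv⟩
  · rfl
  · exact absurd h2 (disjoint_left.mp G.h12 hv)
  · exact absurd h3 (disjoint_left.mp G.h13 hv)

theorem card_triple_inter_V3_le {r1 r2 r3 : α} (h1 : r1 ∈ G.V1) (h2 : r2 ∈ G.V2) :
    ({r1, r2, r3} ∩ G.V3 : Finset α).card ≤ 1 := by
  refine (card_le_card fun v hv => ?_).trans (card_singleton r3).le
  simp only [mem_inter, mem_insert, mem_singleton] at hv ⊢
  rcases hv with ⟨rfl | rfl | rfl, hv⟩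
  · exact absurd hv (disjoint_left.mp G.h13 h1)
  · exact absurd hv (disjoint_left.mp G.h23 h2)
  · rfl

end TriSys

namespace IsFRPartition

variable {G : TriSys α} {P : FRData α}

theorem card_V3_sdiff_W_le (hP : IsFRPartition G P) :
    (G.V3 \ P.W).card ≤ 2 * P.Ffam.card + P.Rfam.card := by
  obtain ⟨-, -, -, -, -, hverts, hF, hR, -⟩ := hP
  have hsub : G.V3 \ P.W ⊆ (famUnion P.Ffam ∩ G.V3) ∪ (famUnion P.Rfam ∩ G.V3) := by
    intro v hv
    obtain ⟨hv3, hvW⟩ := mem_sdiff.mp hv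
    have : v ∈ famUnion P.Ffam ∪ famUnion P.Rfam ∪ P.W := by
      rw [hverts]
      simp [TriSys.verts, hv3]
    simp only [mem_union, mem_inter] at this ⊢
    tauto
  have hFcard := card_famUnion_inter_le fun A hA => (hF A hA).card_inter_V3_le
  have hRcard : (famUnion P.Rfam ∩ G.V3).card ≤ 1 * P.Rfam.card := by
    refine card_famUnion_inter_le fun B hB => ?_
    obtain ⟨r1, h1, r2, h2, r3, -, rfl⟩ := hR B hB
    exact TriSys.card_triple_inter_V3_le h1 h2
  have := card_union_le (famUnion P.Ffam ∩ G.V3) (famUnion P.Rfam ∩ G.V3)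
  have := card_le_card hsub
  omega

theorem card_famUnion_inter_V1_le (hP : IsFRPartition G P) {U : Finset (Finset α)}
    (hU : U ⊆ P.Rfam) : (famUnion U ∩ G.V1).card ≤ U.card := by
  obtain ⟨-, -, -, -, -, -, -, hR, -⟩ := hP
  refine (card_famUnion_inter_le (k := 1) fun B hB => ?_).trans_eq (one_mul _)
  obtain ⟨r1, -, r2, h2, r3, h3, rfl⟩ := hR B (hU hB)
  exact TriSys.card_triple_inter_V1_le h2 h3

end IsFRPartition

section Hall

variable {H : TriSys α} {Rfam U U' : Finset (Finset α)} {Wi Z : Finset α}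

theorem mem_rNbhd {w : α} : w ∈ RNbhd H Wi U ↔ w ∈ Wi ∧ ∃ R ∈ U, RAdj H R w :=
  mem_filter

theorem rNbhd_mono (h : U ⊆ U') : RNbhd H Wi U ⊆ RNbhd H Wi U' :=
  fun _ hw =>
    let ⟨hw, R, hR, hadj⟩ := mem_rNbhd.mp hw
    mem_rNbhd.mpr ⟨hw, R, h hR, hadj⟩

theorem rNbhd_union : RNbhd H Wi (U ∪ U') = RNbhd H Wi U ∪ RNbhd H Wi U' := by
  ext w
  simp only [mem_rNbhd, mem_union, or_and_right, exists_or, and_or_left]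

theorem rNbhd_sdiff : RNbhd H (Wi \ Z) U = RNbhd H Wi U \ Z := by
  ext w
  simp only [mem_rNbhd, mem_sdiff]
  tauto

def HallCond (H : TriSys α) (Rfam : Finset (Finset α)) (Wi : Finset α) : Prop :=
  ∀ U ⊆ Rfam, U.card ≤ (RNbhd H Wi U).card

theorem SaturatingR.hallCond (h : SaturatingR H Rfam Wi) : HallCond H Rfam Wi := by
  obtain ⟨f, hinj, hf⟩ := h
  intro U hU
  rw [← card_image_of_injOn (hinj.mono (coe_subset.mpr hU))]
  refine card_le_card fun w hw => ?_
  obtain ⟨R, hR, rfl⟩ := mem_image.mp hw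
  exact mem_rNbhd.mpr ⟨(hf R (hU hR)).1, R, hR, (hf R (hU hR)).2⟩

theorem SaturatingR.of_hallCond [Nonempty α] (h : HallCond H Rfam Wi) :
    SaturatingR H Rfam Wi := by
  let t : Rfam → Finset α := fun R => Wi.filter (RAdj H R.1)
  have hall : ∀ s : Finset Rfam, s.card ≤ (s.biUnion t).card := by
    intro s
    have : s.biUnion t = RNbhd H Wi (s.map (Function.Embedding.subtype _)) := by
      ext w
      simp only [mem_biUnion, mem_filter, Subtype.exists, exists_and_right, mem_rNbhd, mem_map,
        Function.Embedding.subtype_apply, exists_eq_right, t]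
      tauto
    rw [this, ← card_map (Function.Embedding.subtype _)]
    exact h _ fun R hR => by
      obtain ⟨R', -, rfl⟩ := mem_map.mp hR
      exact R'.2
  obtain ⟨f, hfinj, hf⟩ := (all_card_le_biUnion_card_iff_exists_injective t).mp hall
  refine ⟨fun R => if hR : R ∈ Rfam then f ⟨R, hR⟩ else Classical.arbitrary α, ?_, ?_⟩
  · intro R hR R' hR' heq
    simp only [mem_coe] at hR hR'
    simp only [dif_pos hR, dif_pos hR'] at heq
    exact congrArg Subtype.val (hfinj heq)
  · intro R hR
    simpa [dif_pos hR, t] using hf ⟨R, hR⟩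

theorem HallCond.essentialSet_union (hall : HallCond H Rfam Wi) {C C' : Finset α}
    (hC : EssentialSet H Rfam Wi C) (hC' : EssentialSet H Rfam Wi C') :
    EssentialSet H Rfam Wi (C ∪ C') := by
  obtain ⟨U, hU, hcard, rfl⟩ := hC
  obtain ⟨U', hU', hcard', rfl⟩ := hC'
  refine ⟨U ∪ U', union_subset hU hU', le_antisymm ?_ ?_, rNbhd_union⟩
  · rw [← rNbhd_union]
    exact hall _ (union_subset hU hU')
  · have hinter := hall (U ∩ U') (inter_subset_left.trans hU)
    have hsub : RNbhd H Wi (U ∩ U') ⊆ RNbhd H Wi U ∩ RNbhd H Wi U' :=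
      subset_inter (rNbhd_mono inter_subset_left) (rNbhd_mono inter_subset_right)
    have := card_le_card hsub
    have := card_union_add_card_inter U U'
    have := card_union_add_card_inter (RNbhd H Wi U) (RNbhd H Wi U')
    omega

/-- The neighbourhood of `U` is the maximal essential subset of `Wi`. -/
theorem HallCond.exists_superfluous_iff (hall : HallCond H Rfam Wi) :
    ∃ U ⊆ Rfam, (RNbhd H Wi U).card = U.card ∧
      ∀ w, Superfluous H Rfam Wi w ↔ w ∈ Wi ∧ w ∉ RNbhd H Wi U := by
  have hmax : EssentialSet H Rfam Wi ((Wi.powerset.filter (EssentialSet H Rfam Wi)).sup id) :=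
    sup_induction ⟨∅, empty_subset _, rfl, by simp [RNbhd]⟩
      (fun _ h _ h' => hall.essentialSet_union h h') fun C hC => (mem_filter.mp hC).2
  obtain ⟨U, hU, hcard, hN⟩ := hmax
  rw [← hN] at hcard
  refine ⟨U, hU, hcard.symm, fun w => ⟨fun hw => ⟨hw.1, hw.2 _ ⟨U, hU, hcard, rfl⟩⟩, ?_⟩⟩
  rintro ⟨hw, hwU⟩
  refine ⟨hw, fun C hC hwC => hwU ?_⟩
  have hCW : C ⊆ Wi := by
    obtain ⟨_, -, -, rfl⟩ := hC
    exact filter_subset _ _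
  rw [hN]
  exact le_sup (f := id) (mem_filter.mpr ⟨mem_powerset.mpr hCW, hC⟩) hwC

theorem HallCond.sdiff (hall : HallCond H Rfam Wi) (hU' : U' ⊆ Rfam)
    (hcard : (RNbhd H Wi U').card ≤ U'.card) (hZ : Disjoint (RNbhd H Wi U') Z)
    (h : ∀ U ⊆ Rfam, U' ⊆ U → U.card ≤ (RNbhd H Wi U \ Z).card) :
    HallCond H Rfam (Wi \ Z) := by
  intro U hU
  rw [rNbhd_sdiff]
  have hunion := h (U ∪ U') (union_subset hU hU') subset_union_right
  rw [rNbhd_union, union_sdiff_distrib, sdiff_eq_self_of_disjoint hZ] at hunion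
  have hinter := hall (U ∩ U') (inter_subset_right.trans hU')
  have hsub : RNbhd H Wi (U ∩ U') ⊆ (RNbhd H Wi U \ Z) ∩ RNbhd H Wi U' := by
    intro w hw
    have hwU' := rNbhd_mono inter_subset_right hw
    exact mem_inter.mpr ⟨mem_sdiff.mpr ⟨rNbhd_mono inter_subset_left hw,
      disjoint_left.mp hZ hwU'⟩, hwU'⟩
  have := card_le_card hsub
  have := card_union_add_card_inter U U'
  have := card_union_add_card_inter (RNbhd H Wi U \ Z) (RNbhd H Wi U')
  omega

end Hall

section Cover

variable {H : TriSys α} {Y1 Y2 X : Finset α} {P : FRData α} {U : Finset (Finset α)}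
  {Zs : Finset α}

theorem isCover_of_edgeHome (hY1 : Y1 ⊆ H.V1) (hY2 : Y2 ⊆ H.V2) (hX : X ⊆ H.V3)
    (hnbr : nbr H 1 2 X = Y2) (hFW : ∀ A ∈ P.Ffam, Disjoint A P.W)
    (hRW : ∀ B ∈ P.Rfam, Disjoint B P.W) (hhome : EdgeHome (H.delete (Y1 ∪ Y2 ∪ X)) P)
    (hZs : ∀ e ∈ H.edges, e.1 ∈ Y1 → e.2.2 ∈ P.W ∩ (H.delete (Y1 ∪ Y2 ∪ X)).V3 →
      e.2.2 ∈ Zs ∪ RNbhd (H.delete (Y1 ∪ Y2 ∪ X)) (P.W ∩ (H.delete (Y1 ∪ Y2 ∪ X)).V3) U) :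
    H.IsCover (Y2 ∪
      (Zs ∪ RNbhd (H.delete (Y1 ∪ Y2 ∪ X)) (P.W ∩ (H.delete (Y1 ∪ Y2 ∪ X)).V3) U) ∪
      ((H.delete (Y1 ∪ Y2 ∪ X)).V3 \ P.W) ∪
      (famUnion (P.Rfam \ U) ∩ (H.delete (Y1 ∪ Y2 ∪ X)).V1)) := by
  intro e he
  have h1 : e.1 ∈ evset e := by simp [evset]
  have h2 : e.2.1 ∈ evset e := by simp [evset]
  have h3 : e.2.2 ∈ evset e := by simp [evset]
  by_cases hy2 : e.2.1 ∈ Y2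
  · exact ⟨e.2.1, mem_union_left _ (mem_union_left _ (mem_union_left _ hy2)), h2⟩
  have hx : e.2.2 ∉ X := fun hx => hy2 (hnbr ▸ TriSys.mem_nbr_of_mem he hx)
  have hc : e.2.2 ∈ (H.delete (Y1 ∪ Y2 ∪ X)).V3 := TriSys.mem_delete_V3 hY1 hY2 (H.mem3 e he) hx
  by_cases hW : e.2.2 ∈ P.W
  swap
  · exact ⟨e.2.2, mem_union_left _ (mem_union_right _ (mem_sdiff.mpr ⟨hc, hW⟩)), h3⟩
  by_cases hy1 : e.1 ∈ Y1
  · exact ⟨e.2.2, mem_union_left _ (mem_union_left _ (mem_union_right _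
      (hZs e he hy1 (mem_inter.mpr ⟨hW, hc⟩)))), h3⟩
  have he0 := TriSys.mem_delete_edges hY1 hY2 hX he hy1 hy2 hx
  rcases hhome e he0 with ⟨A, hA, hsub⟩ | ⟨R, hR, hcard⟩
  · exact absurd hW (disjoint_left.mp (hFW A hA) (hsub h3))
  have hR1 : e.1 ∈ R :=
    fst_mem_of_two_le_card_evset_inter hcard fun h => disjoint_left.mp (hRW R hR) h hW
  by_cases hRU : R ∈ U
  · have : e.2.2 ∈ RNbhd (H.delete (Y1 ∪ Y2 ∪ X)) (P.W ∩ (H.delete (Y1 ∪ Y2 ∪ X)).V3) U :=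
      mem_rNbhd.mpr ⟨mem_inter.mpr ⟨hW, hc⟩, R, hRU, e, he0, h3, hcard⟩
    exact ⟨e.2.2, mem_union_left _ (mem_union_left _ (mem_union_right _
      (mem_union_right _ this))), h3⟩
  · have : e.1 ∈ famUnion (P.Rfam \ U) ∩ (H.delete (Y1 ∪ Y2 ∪ X)).V1 :=
      mem_inter.mpr ⟨mem_biUnion.mpr ⟨R, mem_sdiff.mpr ⟨hR, hRU⟩, hR1⟩,
        TriSys.mem1 _ e he0⟩
    exact ⟨e.1, mem_union_right _ this, h1⟩

/-- The cover of `isCover_of_edgeHome` has at most `2ν(H) - |Y1| - |U| + |Zs ∪ N(U)|` vertices. -/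
theorem card_add_card_le_of_tau_eq_two_mul_nu (htau : H.tau = 2 * H.nu)
    (hY1 : Y1 ⊆ H.V1) (hY2 : Y2 ⊆ H.V2) (hX : X ⊆ H.V3) (hY12 : Y1.card = Y2.card)
    (hnbr : nbr H 1 2 X = Y2) (hnu : (H.delete (Y1 ∪ Y2 ∪ X)).nu + Y1.card = H.nu)
    (hP : IsFRPartition (H.delete (Y1 ∪ Y2 ∪ X)) P)
    (hhome : EdgeHome (H.delete (Y1 ∪ Y2 ∪ X)) P) (hU : U ⊆ P.Rfam)
    (hZs : ∀ e ∈ H.edges, e.1 ∈ Y1 → e.2.2 ∈ P.W ∩ (H.delete (Y1 ∪ Y2 ∪ X)).V3 →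
      e.2.2 ∈ Zs ∪ RNbhd (H.delete (Y1 ∪ Y2 ∪ X)) (P.W ∩ (H.delete (Y1 ∪ Y2 ∪ X)).V3) U) :
    Y1.card + U.card ≤
      (Zs ∪ RNbhd (H.delete (Y1 ∪ Y2 ∪ X)) (P.W ∩ (H.delete (Y1 ∪ Y2 ∪ X)).V3) U).card := by
  have hV3 := hP.card_V3_sdiff_W_le
  have hV1 := hP.card_famUnion_inter_V1_le (U := P.Rfam \ U) sdiff_subset
  rw [card_sdiff_of_subset hU] at hV1
  obtain ⟨-, -, -, hFW, hRW, -, -, -, hFR⟩ := hP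
  have hτ := (TriSys.tau_le_card (isCover_of_edgeHome hY1 hY2 hX hnbr hFW hRW hhome hZs)).trans
    ((card_union_le _ _).trans (Nat.add_le_add_right ((card_union_le _ _).trans
      (Nat.add_le_add_right (card_union_le _ _) _)) _))
  have := card_le_card hU
  omega

end Cover

/-- Under the standing hypotheses, the vertices `z_{y,y'}` are pairwise
distinct, and the subgraph of `B₃` induced by `𝓡` and `(W ∩ V₃) \ Z` has a
matching saturating `𝓡`, where `Z` is the set of all `z_{y,y'}`. -/
theorem princes_distinct_and_saturating
    (H : TriSys α) (htau : H.tau = 2 * H.nu)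
    (Y1 Y2 X : Finset α)
    (hcrom : IsCromulent H 0 1 2 Y1 Y2 X)
    (M : Finset (α × α × α)) (hM : H.IsMatching M)
    (hMcard : M.card = Y1.card)
    (hMsub : ∀ e ∈ M, evset e ⊆ Y1 ∪ Y2 ∪ X)
    (P : FRData α)
    (hP : IsHomeBasePartition (H.delete (Y1 ∪ Y2 ∪ X)) P)
    (zf : α → α → α)
    (hzf : ∀ y y' : α, (∃ x, (y, y', x) ∈ M) →
      Superfluous (H.delete (Y1 ∪ Y2 ∪ X)) P.Rfam
        (P.W ∩ (H.delete (Y1 ∪ Y2 ∪ X)).cls 2) (zf y y') ∧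
      (∃ v ∈ (H.delete (Y1 ∪ Y2 ∪ X)).verts, (y, v, zf y y') ∈ H.edges) ∧
      (∃ u ∈ (H.delete (Y1 ∪ Y2 ∪ X)).verts, (u, y', zf y y') ∈ H.edges) ∧
      (∀ s' : α,
        Superfluous (H.delete (Y1 ∪ Y2 ∪ X)) P.Rfam
          (P.W ∩ (H.delete (Y1 ∪ Y2 ∪ X)).cls 2) s' →
        ((∃ v', (y, v', s') ∈ H.edges) ∨ (∃ u', (u', y', s') ∈ H.edges)) →
        s' = zf y y')) :
    (∀ e ∈ M, ∀ e' ∈ M, e ≠ e' → zf e.1 e.2.1 ≠ zf e'.1 e'.2.1) ∧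
    SaturatingR (H.delete (Y1 ∪ Y2 ∪ X)) P.Rfam
      ((P.W ∩ (H.delete (Y1 ∪ Y2 ∪ X)).cls 2) \
        M.image (fun e => zf e.1 e.2.1)) := by
  obtain ⟨-, -, -, ⟨y, -⟩, -, -, hY1, hY2, hX, hY12, -, hnbr, -, -, hnu, -⟩ := hcrom
  obtain ⟨hFR, hmatch, hhome⟩ := hP
  set H₀ := H.delete (Y1 ∪ Y2 ∪ X)
  set Z := M.image fun e => zf e.1 e.2.1
  have hall := (hmatch 2).hallCond
  obtain ⟨U₀, hU₀, hU₀card, hsuperfluous⟩ := hall.exists_superfluous_iff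
  have hfst := hM.image_fst_eq hY2 hX hMsub hMcard
  have hZ (U) (hU : U ⊆ P.Rfam) (hU₀U : U₀ ⊆ U) :
      Y1.card + U.card ≤ (Z ∪ RNbhd H₀ (P.W ∩ H₀.cls 2) U).card := by
    refine card_add_card_le_of_tau_eq_two_mul_nu htau hY1 hY2 hX hY12 hnbr hnu hFR hhome hU
      fun e he he1 hw => ?_
    by_cases hs : Superfluous H₀ P.Rfam (P.W ∩ H₀.cls 2) e.2.2
    · obtain ⟨m, hm, hme⟩ := mem_image.mp (hfst ▸ he1)
      have := (hzf m.1 m.2.1 ⟨m.2.2, hm⟩).2.2.2 e.2.2 hs (Or.inl ⟨e.2.1, hme ▸ he⟩)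
      exact mem_union_left _ (mem_image.mpr ⟨m, hm, this.symm⟩)
    · exact mem_union_right _
        (rNbhd_mono hU₀U (by_contra fun h => hs ((hsuperfluous _).mpr ⟨hw, h⟩)))
  have hZcard : Z.card ≤ Y1.card := hMcard ▸ card_image_le
  refine ⟨fun e he e' he' hne h => hne ?_, ?_⟩
  · have := hZ U₀ hU₀ subset_rfl
    have := card_union_le Z (RNbhd H₀ (P.W ∩ H₀.cls 2) U₀)
    exact (card_image_iff (f := fun e => zf e.1 e.2.1)).mp (show Z.card = M.card by omega)
      he he' h
  · have : Nonempty α := ⟨y⟩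
    refine SaturatingR.of_hallCond (hall.sdiff hU₀ hU₀card.le ?_ fun U hU hU₀U => ?_)
    · refine disjoint_right.mpr fun z hz => ?_
      obtain ⟨e, he, rfl⟩ := mem_image.mp hz
      exact ((hsuperfluous _).mp (hzf _ _ ⟨e.2.2, he⟩).1).2
    · have := hZ U hU hU₀U
      have := card_union_le Z (RNbhd H₀ (P.W ∩ H₀.cls 2) U \ Z)
      rw [union_sdiff_self_eq_union] at this
      omega
end
end
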